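/- arXiv:0905.2191 — 2 statements merged into one kernel-verified Lean document; each statement's English description precedes it below -/
import Mathlib

section
/- Let I ⊆ S be a homogeneous ideal, let K/k be a field extension, let S_K = K[X_1,…,X_n], and let I_K = I·S_K be the extended ideal. Then ν^i(I_K) = ν^i(I) for every i ≥ 1; that is, ν*(I) = ν*(I_K). -/
open MvPolynomial

/-- `nuSeq I i` is the invariant `ν^i(I)` of Hironaka: the supremum (in `ℕ∞`) of those
`ν ∈ ℕ` for which there exist homogeneous elements `φ_1, …, φ_{i-1} ∈ I` with
`S_μ ∩ I = S_μ ∩ ⟨φ_1, …, φ_{i-1}⟩` for all `μ < ν`. -/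
noncomputable def nuSeq {k : Type*} [Field k] {n : ℕ}
    (I : Ideal (MvPolynomial (Fin n) k)) (i : ℕ) : ℕ∞ :=
  sSup ((fun ν : ℕ => (ν : ℕ∞)) ''
    {ν : ℕ | ∃ φ : Fin (i - 1) → MvPolynomial (Fin n) k,
      (∀ j, φ j ∈ I) ∧ (∀ j, ∃ d : ℕ, (φ j).IsHomogeneous d) ∧
      ∀ μ : ℕ, μ < ν →
        (homogeneousSubmodule (Fin n) k μ : Set (MvPolynomial (Fin n) k)) ∩ I =
        (homogeneousSubmodule (Fin n) k μ : Set (MvPolynomial (Fin n) k)) ∩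
          Ideal.span (Set.range φ)})

/-!
For a homogeneous ideal `J` over `k`, the degree-`μ` part of `J_K` is the `K`-span of the
degree-`μ` part of `J`, and a polynomial over `k` lying in the `K`-span of a `k`-subspace `W`
already lies in `W` (apply a `k`-linear retraction `K → k` to the coefficients). Hence
homogeneous generators of `I` below degree `ν` remain generators of `I_K` below degree `ν`, and
conversely agreement of degree parts over `K` descends to `k`.

To turn generators over `K` into generators over `k`, note that homogeneous `φ_j ∈ J` generate
`J` below degree `ν` iff for each `d < ν`, `J_d` is covered by the ideal generated by the
elements of `J` of degree `< d` together with the span of the `φ_j` of degree `d`. This criterion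
involves `J` and the `φ_j` of degree `d` only, so each degree can be treated separately: as
`(I_K)_d` is spanned by `k`-rational elements, an exchange argument in the quotient by the
low-degree part replaces the `φ_j` of degree `d` by as many elements of `I_d`.
-/

open Set Submodule

section Exchange

variable {K V ι : Type*} [Field K] [AddCommGroup V] [Module K V] [Finite ι]

theorem exists_family_mem_span_eq_of_span_le_span_range {s : Set V} (h0 : (0 : V) ∈ s)
    (φ : ι → V) (h : span K s ≤ span K (range φ)) :
    ∃ ψ : ι → V, (∀ j, ψ j ∈ s) ∧ span K s = span K (range ψ) := by
  classical
  have := Fintype.ofFinite ι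
  obtain ⟨b, hbs, hbspan, hbli⟩ := exists_linearIndependent K s
  have hbφ : range ((↑) : b → V) ≤ span K (range φ) := by
    rw [Subtype.range_coe]
    exact subset_span.trans (hbspan.le.trans h)
  have : Finite b := hbli.finite_of_le_span_finite _ (range φ) hbφ
  have := Fintype.ofFinite b
  obtain ⟨e⟩ : Nonempty (b ↪ ι) := Function.Embedding.nonempty_of_card_le <|
    (linearIndependent_le_span_aux' _ hbli _ hbφ).trans (Fintype.card_range_le φ)
  set ψ := Function.extend e Subtype.val 0
  have hψs : ∀ j, ψ j ∈ s := fun j => by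
    simp only [ψ, Function.extend_def]
    split_ifs
    exacts [hbs (Subtype.mem _), h0]
  refine ⟨ψ, hψs, le_antisymm ?_ (span_le.mpr (range_subset_iff.mpr (subset_span <| hψs ·)))⟩
  rw [← hbspan]
  exact span_mono fun x hx => ⟨e ⟨x, hx⟩, e.injective.extend_apply _ _ _⟩

theorem exists_family_mem_span_le_sup_of_span_le_sup (U : Submodule K V) {s : Set V}
    (h0 : (0 : V) ∈ s) (φ : ι → V) (h : span K s ≤ U ⊔ span K (range φ)) :
    ∃ ψ : ι → V, (∀ j, ψ j ∈ s) ∧ span K s ≤ U ⊔ span K (range ψ) := by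
  simp only [← comap_map_mkQ, ← map_le_iff_le_comap, map_span] at h ⊢
  obtain ⟨χ, hχs, hχ⟩ := exists_family_mem_span_eq_of_span_le_span_range
    (mem_image_of_mem U.mkQ h0) (U.mkQ ∘ φ) (by rwa [range_comp])
  choose ψ hψs hψ using hχs
  refine ⟨ψ, hψs, ?_⟩
  rw [hχ, ← range_comp, show U.mkQ ∘ ψ = χ from funext hψ]

end Exchange

attribute [local instance] MvPolynomial.gradedAlgebra

namespace MvPolynomial

section Graded

variable {σ R : Type*} [CommSemiring R]

theorem coe_decompose_homogeneousSubmodule (φ : MvPolynomial σ R) (d : ℕ) :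
    (DirectSum.decompose (homogeneousSubmodule σ R) φ d : MvPolynomial σ R) =
      homogeneousComponent d φ :=
  decomposition.decompose'_apply φ d

theorem homogeneousComponent_mul_of_isHomogeneous {φ : MvPolynomial σ R} {e : ℕ}
    (hφ : φ.IsHomogeneous e) (a : MvPolynomial σ R) (d : ℕ) :
    homogeneousComponent d (a * φ) =
      if e ≤ d then homogeneousComponent (d - e) a * φ else 0 := by
  simpa only [coe_decompose_homogeneousSubmodule] using
    DirectSum.coe_decompose_mul_of_right_mem (homogeneousSubmodule σ R) d (a := a) hφ

theorem isHomogeneous_span_range {ι : Type*} {φ : ι → MvPolynomial σ R}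
    (hφ : ∀ j, ∃ d, (φ j).IsHomogeneous d) :
    (Ideal.span (range φ)).IsHomogeneous (homogeneousSubmodule σ R) :=
  Ideal.homogeneous_span _ _ (by rintro _ ⟨j, rfl⟩; exact hφ j)

noncomputable def degreePart (J : Ideal (MvPolynomial σ R)) (d : ℕ) :
    Submodule R (MvPolynomial σ R) :=
  homogeneousSubmodule σ R d ⊓ J.restrictScalars R

theorem coe_degreePart (J : Ideal (MvPolynomial σ R)) (d : ℕ) :
    (degreePart J d : Set (MvPolynomial σ R)) = (homogeneousSubmodule σ R d : Set _) ∩ J :=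
  rfl

noncomputable def lowDegreeIdeal (J : Ideal (MvPolynomial σ R)) (d : ℕ) :
    Ideal (MvPolynomial σ R) :=
  Ideal.span {x | x ∈ J ∧ ∃ e < d, x.IsHomogeneous e}

variable {ι : Type*} {J : Ideal (MvPolynomial σ R)} {φ : ι → MvPolynomial σ R} {dg : ι → ℕ}

theorem degreePart_span_le_lowDegreeIdeal_sup [Fintype ι]
    (hφ : ∀ j, (φ j).IsHomogeneous (dg j)) (hφJ : ∀ j, φ j ∈ J) (d : ℕ) :
    degreePart (Ideal.span (range φ)) d ≤
      (lowDegreeIdeal J d).restrictScalars R ⊔ span R (range fun j : {j // dg j = d} => φ j) := by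
  rintro x ⟨hx, hxφ⟩
  obtain ⟨a, rfl⟩ := Ideal.mem_span_range_iff_exists_fun.mp hxφ
  rw [← homogeneousComponent_eq_self hx, map_sum]
  refine sum_mem fun j _ => ?_
  rw [homogeneousComponent_mul_of_isHomogeneous (hφ j)]
  rcases lt_trichotomy (dg j) d with hlt | rfl | hgt
  · rw [if_pos hlt.le]
    exact mem_sup_left (Ideal.mul_mem_left _ _ (Ideal.subset_span ⟨hφJ j, dg j, hlt, hφ j⟩))
  · rw [if_pos le_rfl, Nat.sub_self, homogeneousComponent_zero, ← smul_eq_C_mul]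
    exact mem_sup_right (smul_mem _ _ (subset_span ⟨⟨j, rfl⟩, rfl⟩))
  · rw [if_neg hgt.not_ge]
    exact zero_mem _

theorem degreePart_eq_of_le_lowDegreeIdeal_sup (hφJ : ∀ j, φ j ∈ J) {ν : ℕ}
    (h : ∀ d < ν, degreePart J d ≤
      (lowDegreeIdeal J d).restrictScalars R ⊔ span R (range fun j : {j // dg j = d} => φ j)) :
    ∀ μ < ν, degreePart J μ = degreePart (Ideal.span (range φ)) μ := by
  have hspan : Ideal.span (range φ) ≤ J := Ideal.span_le.mpr (range_subset_iff.mpr hφJ)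
  intro μ
  induction μ using Nat.strong_induction_on with
  | _ μ ih =>
  intro hμ
  refine le_antisymm (fun x hx => ⟨hx.1, ?_⟩) (inf_le_inf_left _ (restrictScalars_mono R hspan))
  have hlow : lowDegreeIdeal J μ ≤ Ideal.span (range φ) := Ideal.span_le.mpr
    fun g ⟨hgJ, e, he, hg⟩ => ((ih e he (he.trans hμ)).le ⟨hg, hgJ⟩).2
  have hdeg : span R (range fun j : {j // dg j = μ} => φ j) ≤
      (Ideal.span (range φ)).restrictScalars R :=
    span_le.mpr (by rintro _ ⟨j, rfl⟩; exact Ideal.subset_span ⟨j, rfl⟩)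
  exact sup_le (restrictScalars_mono R hlow) hdeg (h μ hμ hx)

end Graded

section BaseChange

variable {σ k K : Type*}

theorem homogeneousComponent_map [CommSemiring k] [CommSemiring K] (g : k →+* K) (d : ℕ)
    (p : MvPolynomial σ k) :
    homogeneousComponent d (map g p) = map g (homogeneousComponent d p) := by
  ext m
  simp only [coeff_homogeneousComponent, coeff_map, apply_ite g, map_zero]

variable [CommSemiring k] [CommSemiring K] [Algebra k K]

theorem span_range_map_algebraMap :
    span K (range (map (algebraMap k K) : MvPolynomial σ k → MvPolynomial σ K)) = ⊤ := by
  refine eq_top_iff.mpr ((basisMonomials σ K).span_eq.ge.trans (span_mono ?_))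
  rintro _ ⟨m, rfl⟩
  exact ⟨monomial m 1, by simp [coe_basisMonomials]⟩

theorem restrictScalars_ideal_map_eq_span (J : Ideal (MvPolynomial σ k)) :
    (J.map (map (algebraMap k K))).restrictScalars K = span K (map (algebraMap k K) '' J) := by
  rw [Ideal.map, Ideal.span,
    ← span_smul_of_span_eq_top (span_range_map_algebraMap (σ := σ) (k := k))]
  refine le_antisymm (span_mono ?_)
    (span_mono fun _ hx => ⟨1, ⟨1, map_one _⟩, _, hx, one_smul _ _⟩)
  rintro _ ⟨_, ⟨a, rfl⟩, _, ⟨b, hb, rfl⟩, rfl⟩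
  exact ⟨a * b, J.mul_mem_left a hb, map_mul _ _ _⟩

theorem map_mem_degreePart_map {J : Ideal (MvPolynomial σ k)} {d : ℕ} {x : MvPolynomial σ k}
    (hx : x ∈ degreePart J d) :
    map (algebraMap k K) x ∈ degreePart (J.map (map (algebraMap k K))) d :=
  ⟨hx.1.map _, Ideal.mem_map_of_mem _ hx.2⟩

theorem degreePart_map {J : Ideal (MvPolynomial σ k)}
    (hJ : J.IsHomogeneous (homogeneousSubmodule σ k)) (d : ℕ) :
    degreePart (J.map (map (algebraMap k K))) d =
      span K (map (algebraMap k K) '' degreePart J d) := by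
  refine le_antisymm ?_ (span_le.mpr ?_)
  · rintro x ⟨hx, hxJ⟩
    have hx' : x ∈ span K (map (algebraMap k K) '' J) := by
      rw [← restrictScalars_ideal_map_eq_span]; exact hxJ
    have := mem_map_of_mem (f := homogeneousComponent d) hx'
    rw [homogeneousComponent_eq_self hx, map_span, image_image] at this
    refine span_mono ?_ this
    rintro _ ⟨a, ha, rfl⟩
    exact ⟨homogeneousComponent d a, ⟨homogeneousComponent_mem d a,
      homogeneousComponent_mem_of_mem hJ ha d⟩, (homogeneousComponent_map _ d a).symm⟩
  · rintro _ ⟨a, ha, rfl⟩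
    exact map_mem_degreePart_map ha

end BaseChange

section Descent

variable {σ k K : Type*} [Field k] [Field K] [Algebra k K]

theorem mem_of_map_algebraMap_mem_span (W : Submodule k (MvPolynomial σ k))
    {x : MvPolynomial σ k} (hx : map (algebraMap k K) x ∈ span K (map (algebraMap k K) '' W)) :
    x ∈ W := by
  obtain ⟨ℓ, hℓ⟩ := (Algebra.linearMap k K).exists_leftInverse_of_injective
    (LinearMap.ker_eq_bot.mpr (algebraMap k K).injective)
  let L : MvPolynomial σ K → MvPolynomial σ k := AddMonoidAlgebra.map ℓ.toAddMonoidHom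
  have hL : ∀ (r : K) (w : MvPolynomial σ k), L (r • map (algebraMap k K) w) = ℓ r • w := by
    intro r w
    ext m
    change ℓ (coeff m (r • map (algebraMap k K) w)) = _
    rw [coeff_smul, coeff_map, coeff_smul, smul_eq_mul, smul_eq_mul, mul_comm r,
      ← Algebra.smul_def, map_smul, smul_eq_mul, mul_comm]
  have hLspan : ∀ y ∈ span K (map (algebraMap k K) '' W), ∀ r : K, L (r • y) ∈ W := by
    intro y hy
    induction hy using Submodule.span_induction with
    | mem _ h =>
      obtain ⟨w, hw, rfl⟩ := h
      exact fun r => hL r w ▸ W.smul_mem _ hw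
    | zero => intro r; simp [L]
    | add y z _ _ hy hz =>
      intro r; simp only [L, smul_add, AddMonoidAlgebra.map_add]; exact W.add_mem (hy r) (hz r)
    | smul a y _ hy => intro r; rw [smul_smul]; exact hy _
  have hℓ1 : ℓ 1 = 1 := by simpa using LinearMap.congr_fun hℓ 1
  have h := hLspan _ hx 1
  rwa [hL, hℓ1, one_smul] at h

theorem degreePart_le_of_degreePart_map_le {J J' : Ideal (MvPolynomial σ k)}
    (hJ' : J'.IsHomogeneous (homogeneousSubmodule σ k)) {d : ℕ}
    (h : degreePart (J.map (map (algebraMap k K))) d ≤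
      degreePart (J'.map (map (algebraMap k K))) d) :
    degreePart J d ≤ degreePart J' d := fun _ hx =>
  mem_of_map_algebraMap_mem_span _
    (degreePart_map (K := K) hJ' d ▸ h (map_mem_degreePart_map hx))

theorem degreePart_map_eq_iff {J J' : Ideal (MvPolynomial σ k)}
    (hJ : J.IsHomogeneous (homogeneousSubmodule σ k))
    (hJ' : J'.IsHomogeneous (homogeneousSubmodule σ k)) {d : ℕ} :
    degreePart (J.map (map (algebraMap k K))) d = degreePart (J'.map (map (algebraMap k K))) d ↔
      degreePart J d = degreePart J' d :=
  ⟨fun h => le_antisymm (degreePart_le_of_degreePart_map_le hJ' h.le)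
      (degreePart_le_of_degreePart_map_le hJ h.ge),
    fun h => by rw [degreePart_map hJ, degreePart_map hJ', h]⟩

end Descent

section RationalExchange

variable {σ k K ι : Type*} [CommSemiring k] [Field K] [Algebra k K]

theorem exists_family_degreePart_map_le_sup [Finite ι] {I : Ideal (MvPolynomial σ k)}
    (hI : I.IsHomogeneous (homogeneousSubmodule σ k)) (U : Submodule K (MvPolynomial σ K))
    {d : ℕ} {φ : ι → MvPolynomial σ K}
    (h : degreePart (I.map (map (algebraMap k K))) d ≤ U ⊔ span K (range φ)) :
    ∃ χ : ι → MvPolynomial σ k, (∀ j, χ j ∈ degreePart I d) ∧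
      degreePart (I.map (map (algebraMap k K))) d ≤
        U ⊔ span K (range (map (algebraMap k K) ∘ χ)) := by
  rw [degreePart_map hI] at h ⊢
  have h0 : (0 : MvPolynomial σ K) ∈ map (algebraMap k K) '' (degreePart I d : Set _) :=
    ⟨0, zero_mem _, map_zero _⟩
  obtain ⟨ψ, hψ, hspan⟩ := exists_family_mem_span_le_sup_of_span_le_sup U h0 φ h
  choose χ hχ hfχ using hψ
  exact ⟨χ, hχ, by rwa [show map (algebraMap k K) ∘ χ = ψ from _root_.funext hfχ]⟩

end RationalExchange

section Generators

variable {σ R ι : Type*} [CommSemiring R]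

def GeneratesBelow (J : Ideal (MvPolynomial σ R)) (ν : ℕ) (φ : ι → MvPolynomial σ R) : Prop :=
  (∀ j, φ j ∈ J) ∧ (∀ j, ∃ d, (φ j).IsHomogeneous d) ∧
    ∀ μ < ν, degreePart J μ = degreePart (Ideal.span (range φ)) μ

variable {k K : Type*} [Field k] [Field K] [Algebra k K] [Fintype ι]
  {I : Ideal (MvPolynomial σ k)}

theorem exists_degreePart_eq_of_degreePart_map_eq
    (hI : I.IsHomogeneous (homogeneousSubmodule σ k)) {φ : ι → MvPolynomial σ K} {dg : ι → ℕ}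
    (hφ : ∀ j, (φ j).IsHomogeneous (dg j)) (hφI : ∀ j, φ j ∈ I.map (map (algebraMap k K)))
    {ν : ℕ} (hν : ∀ μ < ν,
      degreePart (I.map (map (algebraMap k K))) μ = degreePart (Ideal.span (range φ)) μ) :
    ∃ ψ : ι → MvPolynomial σ k, (∀ j, ψ j ∈ I) ∧ (∀ j, (ψ j).IsHomogeneous (dg j)) ∧
      ∀ μ < ν, degreePart I μ = degreePart (Ideal.span (range ψ)) μ := by
  have hχ : ∀ d, ∃ χ : {j // dg j = d} → MvPolynomial σ k, (∀ j, χ j ∈ degreePart I d) ∧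
      (d < ν → degreePart (I.map (map (algebraMap k K))) d ≤
        (lowDegreeIdeal (I.map (map (algebraMap k K))) d).restrictScalars K ⊔
          span K (range (map (algebraMap k K) ∘ χ))) := by
    intro d
    by_cases hd : d < ν
    · obtain ⟨χ, hχ, hle⟩ := exists_family_degreePart_map_le_sup hI _
        ((hν d hd).trans_le (degreePart_span_le_lowDegreeIdeal_sup hφ hφI d))
      exact ⟨χ, hχ, fun _ => hle⟩
    · exact ⟨0, fun _ => zero_mem _, fun h => absurd h hd⟩
  choose χ hχ hχle using hχ
  set ψ : ι → MvPolynomial σ k := fun j => χ (dg j) ⟨j, rfl⟩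
  have hψχ : ∀ d (j : {j // dg j = d}), ψ j = χ d j := by rintro d ⟨j, rfl⟩; rfl
  have hψ : ∀ j, ψ j ∈ degreePart I (dg j) := fun j => hχ _ _
  refine ⟨ψ, fun j => (hψ j).2, fun j => (hψ j).1, fun μ hμ => ?_⟩
  rw [← degreePart_map_eq_iff (K := K) hI (isHomogeneous_span_range fun j => ⟨dg j, (hψ j).1⟩),
    Ideal.map_span, ← range_comp]
  refine degreePart_eq_of_le_lowDegreeIdeal_sup (dg := dg)
    (fun j => Ideal.mem_map_of_mem _ (hψ j).2) (fun d hd => ?_) μ hμ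
  have hrange : (fun j : {j // dg j = d} => map (algebraMap k K) (ψ j)) =
      map (algebraMap k K) ∘ χ d := _root_.funext fun j => congrArg _ (hψχ d j)
  rw [hrange]
  exact hχle d hd

theorem exists_generatesBelow_map_iff (hI : I.IsHomogeneous (homogeneousSubmodule σ k))
    (ν : ℕ) :
    (∃ φ : ι → MvPolynomial σ K, GeneratesBelow (I.map (map (algebraMap k K))) ν φ) ↔
      ∃ φ : ι → MvPolynomial σ k, GeneratesBelow I ν φ := by
  constructor
  · rintro ⟨φ, hφI, hφ, hν⟩
    choose dg hdg using hφ
    obtain ⟨ψ, hψI, hψ, hψν⟩ := exists_degreePart_eq_of_degreePart_map_eq hI hdg hφI hν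
    exact ⟨ψ, hψI, fun j => ⟨dg j, hψ j⟩, hψν⟩
  · rintro ⟨φ, hφI, hφ, hν⟩
    refine ⟨map (algebraMap k K) ∘ φ, fun j => Ideal.mem_map_of_mem _ (hφI j),
      fun j => (hφ j).imp fun _ hd => hd.map _, fun μ hμ => ?_⟩
    rw [range_comp, ← Ideal.map_span, degreePart_map_eq_iff hI (isHomogeneous_span_range hφ)]
    exact hν μ hμ

end Generators

end MvPolynomial

theorem stmt3 {k K : Type*} [Field k] [Field K] [Algebra k K] {n : ℕ}
    (I : Ideal (MvPolynomial (Fin n) k))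
    (hI : ∀ f ∈ I, ∀ d : ℕ, homogeneousComponent d f ∈ I) :
    ∀ i : ℕ, 1 ≤ i →
      nuSeq (Ideal.map (MvPolynomial.map (algebraMap k K)) I) i = nuSeq I i := by
  intro i _
  have hI' : I.IsHomogeneous (homogeneousSubmodule (Fin n) k) := fun d f hf => by
    rw [coe_decompose_homogeneousSubmodule]
    exact hI f hf d
  simp only [nuSeq, ← coe_degreePart, SetLike.coe_set_eq]
  congr 2
  ext ν
  exact exists_generatesBelow_map_iff hI' ν
end

section
/- In the set of all Hilbert polynomials, i.e. the set of Macaulay polynomials P_a for weakly decreasing tuples a of nonnegative integers, every strictly descending sequence P_1 > P_2 > P_3 > … (with respect to eventual domination) is finite; equivalently, the strict eventual-domination order on this set is well-founded. -/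
/-- The value at the integer `n` of the Macaulay polynomial
`P_a(T) = Σ_{i=1}^{s} binom(T + a_i − i + 1, a_i)` associated to a weakly decreasing
tuple `a = (a_1 ≥ … ≥ a_s ≥ 0)` (here indexed by `i : Fin s`, zero-based, so the
`i`-th summand is `binom(T + a_i − i, a_i)` evaluated at `n`). -/
noncomputable def macaulayEval {s : ℕ} (a : Fin s → ℕ) (n : ℤ) : ℚ :=
  ∑ i : Fin s,
    (∏ j ∈ Finset.range (a i), ((n : ℚ) + (a i : ℚ) - (i : ℕ) - (j : ℚ))) /
      (Nat.factorial (a i) : ℚ)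

/-!
A weakly decreasing tuple `a` is sent to the ordinal `ω ^ a₀ + ω ^ a₁ + ⋯`, written in Cantor
normal form, so that comparing these ordinals compares the tuples lexicographically, a proper
prefix being smaller. The summand `binom(T + c − i, c)` (`macaulayTerm c i`) of `P_a` grows
like `T ^ c`. Hence if `a` and `b` first differ at position `k` with `a_k < b_k`, all summands
of `P_a` from position `k` on are negligible against the `k`-th summand of `P_b`, and
`P_a < P_b` eventually; if `a` is a proper prefix of `b` then `P_a ≤ P_b` eventually. So
eventual domination `P_b < P_a` forces the ordinal of `b` to be smaller than that of `a`, and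
ordinals are well-founded.
-/

open Filter Finset Asymptotics Ordinal

noncomputable def macaulayTerm (c i : ℕ) (q : ℚ) : ℚ :=
  (∏ j ∈ range c, (q + c - i - j)) / (c.factorial : ℚ)

noncomputable def macaulaySum (f : ℕ → ℕ) (p : ℕ) (q : ℚ) : ℚ :=
  ∑ i ∈ range p, macaulayTerm (f i) i q

lemma Rat.norm_eq_abs (r : ℚ) : ‖r‖ = ((|r| : ℚ) : ℝ) := by
  rw [← Rat.norm_cast_real, Real.norm_eq_abs, Rat.cast_abs]

lemma Rat.isBigO_of_abs_le {α : Type*} {l : Filter α} {f g : α → ℚ} (C : ℚ)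
    (h : ∀ᶠ x in l, |f x| ≤ C * |g x|) : f =O[l] g :=
  IsBigO.of_bound C <| h.mono fun x hx => by
    rw [Rat.norm_eq_abs, Rat.norm_eq_abs]
    exact_mod_cast hx

section macaulayTerm

variable {c i : ℕ} {q : ℚ}

lemma macaulayTerm_factor_bounds {j : ℕ} (hj : j ∈ range c) :
    q - i + 1 ≤ q + c - i - j ∧ q + c - i - j ≤ q + c := by
  have hjc : (j : ℚ) + 1 ≤ c := by exact_mod_cast mem_range.mp hj
  constructor <;> linarith [(i.cast_nonneg : (0 : ℚ) ≤ i), (j.cast_nonneg : (0 : ℚ) ≤ j)]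

lemma pow_div_factorial_le_macaulayTerm (h : (i : ℚ) ≤ q) :
    (q - i + 1) ^ c / c.factorial ≤ macaulayTerm c i q := by
  unfold macaulayTerm
  gcongr
  calc (q - i + 1) ^ c = ∏ _j ∈ range c, (q - i + 1) := by rw [prod_const, card_range]
    _ ≤ ∏ j ∈ range c, (q + c - i - j) :=
      prod_le_prod (fun _ _ => by linarith) fun _ hj => (macaulayTerm_factor_bounds hj).1

lemma macaulayTerm_pos (h : (i : ℚ) ≤ q) : 0 < macaulayTerm c i q :=
  (div_pos (pow_pos (by linarith) c) (by exact_mod_cast c.factorial_pos)).trans_le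
    (pow_div_factorial_le_macaulayTerm h)

lemma macaulayTerm_le_pow (h : (i : ℚ) ≤ q) : macaulayTerm c i q ≤ (q + c) ^ c := by
  have hfactor_nonneg : ∀ j ∈ range c, 0 ≤ q + c - i - j := fun _ hj =>
    le_trans (by linarith) (macaulayTerm_factor_bounds hj).1
  calc macaulayTerm c i q ≤ ∏ j ∈ range c, (q + c - i - j) :=
        div_le_self (prod_nonneg hfactor_nonneg) (by exact_mod_cast c.factorial_pos)
    _ ≤ ∏ _j ∈ range c, (q + c) :=
        prod_le_prod hfactor_nonneg fun _ hj => (macaulayTerm_factor_bounds hj).2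
    _ = (q + c) ^ c := by rw [prod_const, card_range]

lemma macaulayTerm_isBigO_pow : macaulayTerm c i =O[atTop] (· ^ c) := by
  refine Rat.isBigO_of_abs_le (2 ^ c) ?_
  filter_upwards [eventually_ge_atTop (i : ℚ), eventually_ge_atTop (c : ℚ)] with q hi hc
  have hq : 0 ≤ q := le_trans c.cast_nonneg hc
  rw [abs_of_pos (macaulayTerm_pos hi), abs_of_nonneg (by positivity)]
  calc macaulayTerm c i q ≤ (q + c) ^ c := macaulayTerm_le_pow hi
    _ ≤ (2 * q) ^ c := by gcongr; linarith
    _ = 2 ^ c * q ^ c := mul_pow _ _ _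

lemma pow_isBigO_macaulayTerm : (· ^ c) =O[atTop] macaulayTerm c i := by
  refine Rat.isBigO_of_abs_le (2 ^ c * c.factorial) ?_
  filter_upwards [eventually_ge_atTop (2 * i : ℚ), eventually_ge_atTop 0] with q hi hq
  have hiq : (i : ℚ) ≤ q := by linarith [(i.cast_nonneg : (0 : ℚ) ≤ i)]
  rw [abs_of_pos (macaulayTerm_pos hiq), abs_of_nonneg (by positivity)]
  have hfac : (0 : ℚ) < c.factorial := by exact_mod_cast c.factorial_pos
  calc q ^ c ≤ (2 * (q - i + 1)) ^ c := by gcongr; linarith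
    _ = 2 ^ c * c.factorial * ((q - i + 1) ^ c / c.factorial) := by
        rw [mul_pow]; field_simp
    _ ≤ 2 ^ c * c.factorial * macaulayTerm c i q := by
        gcongr; exact pow_div_factorial_le_macaulayTerm hiq

lemma macaulayTerm_isLittleO {e j : ℕ} (h : c < e) :
    macaulayTerm c i =o[atTop] macaulayTerm e j :=
  macaulayTerm_isBigO_pow.trans_isLittleO
    ((isLittleO_pow_pow_atTop_of_lt h).trans_isBigO pow_isBigO_macaulayTerm)

end macaulayTerm

section macaulaySum

variable {f g : ℕ → ℕ} {p p' : ℕ}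

lemma macaulaySum_congr {k : ℕ} (h : ∀ i < k, f i = g i) :
    macaulaySum f k = macaulaySum g k :=
  funext fun _ => sum_congr rfl fun i hi => by rw [h i (mem_range.mp hi)]

lemma macaulaySum_eq_add_sum_Ico {k : ℕ} (hk : k ≤ p) (q : ℚ) :
    macaulaySum f p q = macaulaySum f k q + ∑ i ∈ Ico k p, macaulayTerm (f i) i q :=
  (sum_range_add_sum_Ico _ hk).symm

lemma eventually_macaulaySum_le_of_prefix (hp : p ≤ p') (hfg : ∀ i < p, f i = g i) :
    ∀ᶠ q in atTop, macaulaySum f p q ≤ macaulaySum g p' q := by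
  filter_upwards [eventually_ge_atTop (p' : ℚ)] with q hq
  rw [macaulaySum_congr hfg, macaulaySum_eq_add_sum_Ico hp]
  refine le_add_of_nonneg_right (sum_nonneg fun i hi => (macaulayTerm_pos ?_).le)
  exact le_trans (by exact_mod_cast (mem_Ico.mp hi).2.le) hq

lemma eventually_macaulaySum_lt {k : ℕ} (hkp : k ≤ p) (hkp' : k < p')
    (hfg : ∀ i < k, f i = g i) (hf : ∀ i ∈ Ico k p, f i < g k) :
    ∀ᶠ q in atTop, macaulaySum f p q < macaulaySum g p' q := by
  have htail : (fun q => ∑ i ∈ Ico k p, macaulayTerm (f i) i q) =o[atTop]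
      macaulayTerm (g k) k :=
    IsLittleO.fun_sum fun i hi => macaulayTerm_isLittleO (hf i hi)
  have hpos : ∀ᶠ q in atTop, 0 < ‖macaulayTerm (g k) k q‖ :=
    (eventually_ge_atTop (k : ℚ)).mono fun q hq => norm_pos_iff.mpr (macaulayTerm_pos hq).ne'
  filter_upwards [htail.eventuallyLT_norm_of_eventually_pos hpos,
    eventually_ge_atTop (p' : ℚ)] with q hlt hq
  have hiq : ∀ i ∈ Ico k p', (i : ℚ) ≤ q := fun i hi =>
    le_trans (by exact_mod_cast (mem_Ico.mp hi).2.le) hq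
  have hterm : 0 < macaulayTerm (g k) k q := macaulayTerm_pos (hiq k (by simp [hkp']))
  rw [macaulaySum_eq_add_sum_Ico hkp, macaulaySum_eq_add_sum_Ico hkp'.le, macaulaySum_congr hfg]
  rw [Rat.norm_eq_abs, Rat.norm_eq_abs, Rat.cast_lt, abs_of_pos hterm] at hlt
  gcongr
  calc ∑ i ∈ Ico k p, macaulayTerm (f i) i q ≤ |∑ i ∈ Ico k p, macaulayTerm (f i) i q| :=
        le_abs_self _
    _ < macaulayTerm (g k) k q := hlt
    _ ≤ ∑ i ∈ Ico k p', macaulayTerm (g i) i q :=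
      single_le_sum (f := fun i => macaulayTerm (g i) i q)
        (fun i hi => (macaulayTerm_pos (hiq i hi)).le) (by simp [hkp'])

end macaulaySum

noncomputable def macaulayOrdinal (f : ℕ → ℕ) : ℕ → Ordinal.{0}
  | 0 => 0
  | p + 1 => macaulayOrdinal f p + ω ^ (f p : Ordinal)

section macaulayOrdinal

variable {f g : ℕ → ℕ} {p p' : ℕ}

lemma macaulayOrdinal_congr (h : ∀ i < p, f i = g i) :
    macaulayOrdinal f p = macaulayOrdinal g p := by
  induction p with
  | zero => rfl
  | succ p ih =>
    rw [macaulayOrdinal, macaulayOrdinal, ih fun i hi => h i (by omega), h p (by omega)]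

lemma macaulayOrdinal_mono (hp : p ≤ p') : macaulayOrdinal f p ≤ macaulayOrdinal f p' := by
  induction p', hp using Nat.le_induction with
  | base => rfl
  | succ p' _ ih => exact ih.trans le_self_add

lemma exists_macaulayOrdinal_eq_add_lt {k e : ℕ} (hk : k ≤ p) (he : ∀ i ∈ Ico k p, f i < e) :
    ∃ t < ω ^ (e : Ordinal), macaulayOrdinal f p = macaulayOrdinal f k + t := by
  induction p, hk using Nat.le_induction with
  | base => exact ⟨0, opow_pos _ omega0_pos, (add_zero _).symm⟩
  | succ p hkp ih =>
    obtain ⟨t, ht, heq⟩ := ih fun i hi => he i (Ico_subset_Ico_right p.le_succ hi)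
    have hfp : ω ^ (f p : Ordinal) < ω ^ (e : Ordinal) :=
      (opow_lt_opow_iff_right one_lt_omega0).mpr (by exact_mod_cast he p (by simp [hkp]))
    exact ⟨t + ω ^ (f p : Ordinal), isPrincipal_add_omega0_opow _ ht hfp,
      by rw [macaulayOrdinal, heq, add_assoc]⟩

lemma macaulayOrdinal_lt_of_prefix (hp : p < p') (hfg : ∀ i < p, f i = g i) :
    macaulayOrdinal f p < macaulayOrdinal g p' :=
  calc macaulayOrdinal f p = macaulayOrdinal g p := macaulayOrdinal_congr hfg
    _ < macaulayOrdinal g (p + 1) := lt_add_of_pos_right _ (opow_pos _ omega0_pos)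
    _ ≤ macaulayOrdinal g p' := macaulayOrdinal_mono hp

lemma macaulayOrdinal_lt {k : ℕ} (hkp : k ≤ p) (hkp' : k < p')
    (hfg : ∀ i < k, f i = g i) (hf : ∀ i ∈ Ico k p, f i < g k) :
    macaulayOrdinal f p < macaulayOrdinal g p' := by
  obtain ⟨t, ht, heq⟩ := exists_macaulayOrdinal_eq_add_lt hkp hf
  calc macaulayOrdinal f p = macaulayOrdinal g k + t := by rw [heq, macaulayOrdinal_congr hfg]
    _ < macaulayOrdinal g (k + 1) := add_lt_add_right ht _
    _ ≤ macaulayOrdinal g p' := macaulayOrdinal_mono hkp'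

end macaulayOrdinal

lemma macaulayOrdinal_lt_of_eventually_lt {f g : ℕ → ℕ} {p p' : ℕ}
    (hf : AntitoneOn f (Set.Iio p)) (hg : AntitoneOn g (Set.Iio p'))
    (h : ∀ᶠ n : ℤ in atTop, macaulaySum f p n < macaulaySum g p' n) :
    macaulayOrdinal f p < macaulayOrdinal g p' := by
  have hnot_le : ¬ ∀ᶠ q in atTop, macaulaySum g p' q ≤ macaulaySum f p q := fun hle =>
    let ⟨_, hlt, hle⟩ := (h.and (tendsto_intCast_atTop_atTop.eventually hle)).exists
    hlt.not_ge hle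
  by_cases hdiff : ∃ i, i < p ∧ i < p' ∧ f i ≠ g i
  · obtain ⟨hkp, hkp', hne⟩ := Nat.find_spec hdiff
    have hfg : ∀ i < Nat.find hdiff, f i = g i := fun i hi => by
      by_contra hne'
      exact Nat.find_min hdiff hi ⟨by omega, by omega, hne'⟩
    rcases Nat.lt_or_gt_of_ne hne with hlt | hgt
    · exact macaulayOrdinal_lt hkp.le hkp' hfg fun i hi =>
        (hf hkp (mem_Ico.mp hi).2 (mem_Ico.mp hi).1).trans_lt hlt
    · have hgf := eventually_macaulaySum_lt hkp'.le hkp (fun i hi => (hfg i hi).symm)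
        fun i hi => (hg hkp' (mem_Ico.mp hi).2 (mem_Ico.mp hi).1).trans_lt hgt
      exact absurd (hgf.mono fun _ => le_of_lt) hnot_le
  · push Not at hdiff
    rcases lt_or_ge p p' with hp | hp
    · exact macaulayOrdinal_lt_of_prefix hp fun i hi => hdiff i hi (hi.trans hp)
    · exact absurd (eventually_macaulaySum_le_of_prefix hp fun i hi =>
        (hdiff i (hi.trans_le hp) hi).symm) hnot_le

def extendFin {s : ℕ} (a : Fin s → ℕ) (i : ℕ) : ℕ :=
  if h : i < s then a ⟨i, h⟩ else 0

lemma antitoneOn_extendFin {s : ℕ} {a : Fin s → ℕ} (ha : Antitone a) :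
    AntitoneOn (extendFin a) (Set.Iio s) := fun i hi j hj hij => by
  simp only [extendFin, dif_pos (Set.mem_Iio.mp hi), dif_pos (Set.mem_Iio.mp hj)]
  exact ha (Fin.mk_le_mk.mpr hij)

lemma macaulayEval_eq_macaulaySum {s : ℕ} (a : Fin s → ℕ) (n : ℤ) :
    macaulayEval a n = macaulaySum (extendFin a) s n := by
  rw [macaulaySum, ← Fin.sum_univ_eq_sum_range (fun i => macaulayTerm (extendFin a i) i n)]
  simp only [macaulayEval, macaulayTerm, extendFin, Fin.is_lt, dif_pos]

theorem stmt8_general (s : ℕ → ℕ)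
    (a : ∀ m : ℕ, Fin (s m) → ℕ) (ha : ∀ m, Antitone (a m)) :
    ¬ (∀ m : ℕ, ∃ N : ℤ, ∀ n ≥ N, macaulayEval (a (m + 1)) n < macaulayEval (a m) n) := by
  intro hdesc
  obtain ⟨m, hm⟩ := WellFounded.not_rel_apply_succ (r := (· < ·))
    fun m => macaulayOrdinal (extendFin (a m)) (s m)
  refine hm (macaulayOrdinal_lt_of_eventually_lt (antitoneOn_extendFin (ha _))
    (antitoneOn_extendFin (ha _)) ?_)
  simpa only [eventually_atTop, ← macaulayEval_eq_macaulaySum] using hdesc m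

/-- In the set of all Hilbert polynomials (= Macaulay polynomials), every strictly
descending sequence with respect to eventual domination is finite: there is no
infinite sequence of Macaulay polynomials each eventually strictly dominating
the next. -/
theorem stmt8 (s : ℕ → ℕ) (hs : ∀ m, 1 ≤ s m)
    (a : ∀ m : ℕ, Fin (s m) → ℕ) (ha : ∀ m, Antitone (a m)) :
    ¬ (∀ m : ℕ, ∃ N : ℤ, ∀ n ≥ N, macaulayEval (a (m + 1)) n < macaulayEval (a m) n) :=
  stmt8_general s a ha
end
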